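/- arXiv:1706.02074 — 2 statements merged into one kernel-verified Lean document; each statement's English description precedes it below -/
import Mathlib

section
/- Let Σ(x) = (x, a(x), b₀(x)²) be the image of the singular curve of the folded cuspidal edge φ, and define its curvature κ_Σ(x) = ‖Σ'(x) × Σ''(x)‖/‖Σ'(x)‖³ and (where Σ'(x) × Σ''(x) ≠ 0) its torsion τ_Σ(x) = det(Σ'(x), Σ''(x), Σ'''(x))/‖Σ'(x) × Σ''(x)‖². Then κ_Σ(0) = √(a''(0)² + 4b₀'(0)⁴), and if a''(0)² + 4b₀'(0)⁴ ≠ 0 then τ_Σ(0) = 2b₀'(0)(3a''(0)b₀''(0) − a'''(0)b₀'(0))/(a''(0)² + 4b₀'(0)⁴). -/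
open Real Set

/-- Cross product of two vectors in ℝ³. -/
noncomputable def cross3 (a b : Fin 3 → ℝ) : Fin 3 → ℝ :=
  ![a 1 * b 2 - a 2 * b 1, a 2 * b 0 - a 0 * b 2, a 0 * b 1 - a 1 * b 0]

/-- Determinant of three vectors in ℝ³. -/
noncomputable def det3 (a b c : Fin 3 → ℝ) : ℝ :=
  Matrix.det (Matrix.of ![a, b, c])

/-- Euclidean norm on ℝ³. -/
noncomputable def norm3 (a : Fin 3 → ℝ) : ℝ :=
  Real.sqrt (a 0 ^ 2 + a 1 ^ 2 + a 2 ^ 2)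

/-- Euclidean inner product on ℝ³. -/
noncomputable def dot3 (a b : Fin 3 → ℝ) : ℝ :=
  a 0 * b 0 + a 1 * b 1 + a 2 * b 2

/-! At `0` the tangent `Σ'(0) = (1, a'(0), 2 b₀(0) b₀'(0))` is the unit vector `e₁`, because
`a'(0) = b₀(0) = 0`. Hence `Σ''(0)` and `Σ'''(0)` only matter through their `(y, z)`-components
`(a''(0), (b₀²)''(0))` and `(a'''(0), (b₀²)'''(0))`, and the Leibniz rule with `b₀(0) = 0` gives
`(b₀²)''(0) = 2 b₀'(0)²` and `(b₀²)'''(0) = 6 b₀'(0) b₀''(0)`. The curvature and torsion then reduce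
to a `2 × 2` norm and determinant. -/

theorem iteratedDeriv_pi_apply {𝕜 ι : Type*} [NontriviallyNormedField 𝕜] [Fintype ι]
    {E : ι → Type*} [∀ i, NormedAddCommGroup (E i)] [∀ i, NormedSpace 𝕜 (E i)]
    {n : ℕ} {F : 𝕜 → (i : ι) → E i} (hF : ContDiff 𝕜 n F) (x : 𝕜) (i : ι) :
    iteratedDeriv n F x i = iteratedDeriv n (fun y => F y i) x := by
  induction n generalizing F with
  | zero => simp
  | succ n ih =>
    have hdiff : Differentiable 𝕜 F := hF.differentiable (by simp)
    have hderiv : deriv F = fun y => (fun i => deriv (fun z => F z i) y) :=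
      funext fun y => deriv_pi fun i => (differentiable_pi.1 hdiff i).differentiableAt
    rw [iteratedDeriv_succ', ih (by exact_mod_cast hF.deriv'), iteratedDeriv_succ', hderiv]

theorem iteratedDeriv_vec3 {n : ℕ} {f g h : ℝ → ℝ} (hf : ContDiff ℝ n f) (hg : ContDiff ℝ n g)
    (hh : ContDiff ℝ n h) (x : ℝ) :
    iteratedDeriv n (fun y => ![f y, g y, h y]) x =
      ![iteratedDeriv n f x, iteratedDeriv n g x, iteratedDeriv n h x] := by
  have hF : ContDiff ℝ n (fun y => ![f y, g y, h y]) := by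
    refine contDiff_pi.2 fun i => ?_
    fin_cases i <;> simpa
  ext i
  rw [iteratedDeriv_pi_apply hF]
  fin_cases i <;> rfl

theorem iteratedDeriv_sq {𝕜 : Type*} [NontriviallyNormedField 𝕜] {n : ℕ} {f : 𝕜 → 𝕜}
    (hf : ContDiff 𝕜 n f) (x : 𝕜) :
    iteratedDeriv n (fun y => f y ^ 2) x = ∑ i ∈ Finset.range (n + 1),
      n.choose i * iteratedDeriv i f x * iteratedDeriv (n - i) f x := by
  simp_rw [pow_two]
  exact iteratedDeriv_fun_mul hf.contDiffAt hf.contDiffAt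

theorem norm3_vec3 (u v w : ℝ) : norm3 ![u, v, w] = √(u ^ 2 + v ^ 2 + w ^ 2) := rfl

theorem cross3_e1 (A B : ℝ) : cross3 ![1, 0, 0] ![0, A, B] = ![0, -B, A] := by
  ext i; fin_cases i <;> simp [cross3]

theorem det3_e1 (A B C D : ℝ) : det3 ![1, 0, 0] ![0, A, B] ![0, C, D] = A * D - B * C := by
  simp [det3, Matrix.det_fin_three]

theorem stmt6_general (a b₀ : ℝ → ℝ)
    (ha : ContDiff ℝ (⊤ : ℕ∞) a) (hb₀ : ContDiff ℝ (⊤ : ℕ∞) b₀)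
    (ha0' : deriv a 0 = 0) (hb₀0 : b₀ 0 = 0)
    (Sgm : ℝ → Fin 3 → ℝ) (hSgm : ∀ x, Sgm x = ![x, a x, b₀ x ^ 2])
    (κS τS : ℝ → ℝ)
    (hκS : ∀ x, κS x =
      norm3 (cross3 (deriv Sgm x) (iteratedDeriv 2 Sgm x)) / norm3 (deriv Sgm x) ^ 3)
    (hτS : ∀ x, τS x =
      det3 (deriv Sgm x) (iteratedDeriv 2 Sgm x) (iteratedDeriv 3 Sgm x) /
        norm3 (cross3 (deriv Sgm x) (iteratedDeriv 2 Sgm x)) ^ 2) :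
    κS 0 = Real.sqrt (iteratedDeriv 2 a 0 ^ 2 + 4 * deriv b₀ 0 ^ 4) ∧
      (iteratedDeriv 2 a 0 ^ 2 + 4 * deriv b₀ 0 ^ 4 ≠ 0 →
        τS 0 = 2 * deriv b₀ 0 *
            (3 * iteratedDeriv 2 a 0 * iteratedDeriv 2 b₀ 0 -
              iteratedDeriv 3 a 0 * deriv b₀ 0) /
          (iteratedDeriv 2 a 0 ^ 2 + 4 * deriv b₀ 0 ^ 4)) := by
  obtain rfl : Sgm = fun x => ![x, a x, b₀ x ^ 2] := funext hSgm
  have hS (n : ℕ) : iteratedDeriv n (fun x => ![x, a x, b₀ x ^ 2]) 0 =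
      ![iteratedDeriv n (fun x => x) 0, iteratedDeriv n a 0,
        ∑ i ∈ Finset.range (n + 1), n.choose i * iteratedDeriv i b₀ 0 *
          iteratedDeriv (n - i) b₀ 0] := by
    have hb₀n : ContDiff ℝ n b₀ := hb₀.of_le (by exact_mod_cast le_top)
    rw [iteratedDeriv_vec3 contDiff_fun_id (ha.of_le (by exact_mod_cast le_top)) (hb₀n.pow 2),
      iteratedDeriv_sq hb₀n]
  have hS₁ : deriv (fun x => ![x, a x, b₀ x ^ 2]) 0 = ![1, 0, 0] := by
    rw [← iteratedDeriv_one, hS]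
    simp [Finset.sum_range_succ, ha0', hb₀0]
  have hS₂ : iteratedDeriv 2 (fun x => ![x, a x, b₀ x ^ 2]) 0 =
      ![0, iteratedDeriv 2 a 0, 2 * deriv b₀ 0 ^ 2] := by
    simp only [hS, Finset.sum_range_succ, Finset.sum_range_zero, iteratedDeriv_fun_id_zero,
      iteratedDeriv_zero, iteratedDeriv_one, hb₀0, Nat.reduceEqDiff, if_false, Nat.choose,
      Nat.reduceSub, Matrix.vecCons_inj, and_true, true_and]
    ring
  have hS₃ : iteratedDeriv 3 (fun x => ![x, a x, b₀ x ^ 2]) 0 =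
      ![0, iteratedDeriv 3 a 0, 6 * deriv b₀ 0 * iteratedDeriv 2 b₀ 0] := by
    simp only [hS, Finset.sum_range_succ, Finset.sum_range_zero, iteratedDeriv_fun_id_zero,
      iteratedDeriv_zero, iteratedDeriv_one, hb₀0, Nat.reduceEqDiff, if_false, Nat.choose,
      Nat.reduceSub, Matrix.vecCons_inj, and_true, true_and]
    ring
  have hcurv : norm3 ![0, -(2 * deriv b₀ 0 ^ 2), iteratedDeriv 2 a 0] =
      √(iteratedDeriv 2 a 0 ^ 2 + 4 * deriv b₀ 0 ^ 4) := by
    rw [norm3_vec3]; ring_nf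
  refine ⟨?_, fun _ => ?_⟩
  · rw [hκS, hS₁, hS₂, cross3_e1, hcurv, norm3_vec3]
    norm_num
  · rw [hτS, hS₁, hS₂, hS₃, cross3_e1, det3_e1, hcurv, sq_sqrt (by positivity)]
    ring

/-- For the cuspidal edge curve `Σ(x) = (x, a(x), b₀(x)²)` (here `Sgm`)
of the folded cuspidal edge, with curvature `κ_Σ = ‖Σ' × Σ''‖/‖Σ'‖³` and torsion
`τ_Σ = det(Σ', Σ'', Σ''')/‖Σ' × Σ''‖²`, one has `κ_Σ(0) = √(a''(0)² + 4b₀'(0)⁴)`,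
and if `a''(0)² + 4b₀'(0)⁴ ≠ 0` then
`τ_Σ(0) = 2b₀'(0)(3a''(0)b₀''(0) − a'''(0)b₀'(0))/(a''(0)² + 4b₀'(0)⁴)`. -/
theorem stmt6 (a b₀ : ℝ → ℝ)
    (ha : ContDiff ℝ (⊤ : ℕ∞) a) (hb₀ : ContDiff ℝ (⊤ : ℕ∞) b₀)
    (ha0 : a 0 = 0) (ha0' : deriv a 0 = 0) (hb₀0 : b₀ 0 = 0)
    (Sgm : ℝ → Fin 3 → ℝ) (hSgm : ∀ x, Sgm x = ![x, a x, b₀ x ^ 2])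
    (κS τS : ℝ → ℝ)
    (hκS : ∀ x, κS x =
      norm3 (cross3 (deriv Sgm x) (iteratedDeriv 2 Sgm x)) / norm3 (deriv Sgm x) ^ 3)
    (hτS : ∀ x, τS x =
      det3 (deriv Sgm x) (iteratedDeriv 2 Sgm x) (iteratedDeriv 3 Sgm x) /
        norm3 (cross3 (deriv Sgm x) (iteratedDeriv 2 Sgm x)) ^ 2) :
    κS 0 = Real.sqrt (iteratedDeriv 2 a 0 ^ 2 + 4 * deriv b₀ 0 ^ 4) ∧
      (iteratedDeriv 2 a 0 ^ 2 + 4 * deriv b₀ 0 ^ 4 ≠ 0 →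
        τS 0 = 2 * deriv b₀ 0 *
            (3 * iteratedDeriv 2 a 0 * iteratedDeriv 2 b₀ 0 -
              iteratedDeriv 3 a 0 * deriv b₀ 0) /
          (iteratedDeriv 2 a 0 ^ 2 + 4 * deriv b₀ 0 ^ 4)) :=
  stmt6_general a b₀ ha hb₀ ha0' hb₀0 Sgm hSgm κS τS hκS hτS
end

section
/- Assume b₀'(0) ≠ 0, let ε > 0 and let d : (−ε, ε) → ℝ be a smooth function with d(0) = 0 satisfying b₀(d(y)) + b₁(d(y))·y² + ½(b₃(d(y), y) + b₃(d(y), −y))·y⁴ = 0 for all |y| < ε. Define the singular space curve d̃(y) = f(d(y), y), where f(x,y) = (x, a(x) + y²/2, b₀(x) + b₁(x)y² + b₂(x)y³ + b₃(x,y)y⁴) is the cuspidal edge before folding. Then d̃'(0) = (0,0,0), d̃''(0) = (−2b₁(0)/b₀'(0), 1, 0), and d̃'''(0) = (0, 0, 6b₂(0)). In particular, if b₂(0) ≠ 0 then d̃''(0) × d̃'''(0) ≠ 0, i.e. 0 is a (2,3)-type singular point of d̃. -/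
/-!
Differentiating the double point equation `b₀(d y) + b₁(d y) y² = O(y⁴)` three times at `0`
and using `b₀'(0) ≠ 0` gives `d'(0) = 0`, `d''(0) = -2 b₁(0) / b₀'(0)` and `d'''(0) = 0`.
Since `d'(0) = 0`, Faà di Bruno reduces the derivatives of order `1, 2, 3` of `a ∘ d` at `0` to
`a'(0) d⁽ᵏ⁾(0) = 0`; and by the same equation the last coordinate of `d̃` is
`b₂(d y) y³ + O(y⁴)`, whose third derivative at `0` is `6 b₂(0)`.
-/

open Real Set

open Filter Topology

section IteratedDeriv

variable {𝕜 : Type*} [NontriviallyNormedField 𝕜]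

theorem iteratedDeriv_mul_pow_zero {c : 𝕜 → 𝕜} {k : ℕ} (hc : ContDiffAt 𝕜 k c 0) (m : ℕ) :
    iteratedDeriv k (fun y => c y * y ^ m) 0 = k.descFactorial m * iteratedDeriv (k - m) c 0 := by
  rw [iteratedDeriv_fun_mul hc (by fun_prop)]
  simp only [iteratedDeriv_fun_pow_zero, Nat.cast_ite, Nat.cast_zero, mul_ite, mul_zero]
  rcases le_or_gt m k with hmk | hkm
  · rw [Finset.sum_eq_single (k - m)
        (fun i hi hne => if_neg (by have := Finset.mem_range.1 hi; omega))
        (fun h => absurd (Finset.mem_range.2 (by omega)) h),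
      if_pos (by omega), Nat.descFactorial_eq_factorial_mul_choose, Nat.choose_symm hmk]
    push_cast
    ring
  · rw [Nat.descFactorial_eq_zero_iff_lt.mpr hkm, Nat.cast_zero, zero_mul]
    exact Finset.sum_eq_zero fun i _ => if_neg (by omega)

theorem iteratedDeriv_eq_zero_of_eventuallyEq_mul_pow {g c : 𝕜 → 𝕜} {k m : ℕ}
    (hg : g =ᶠ[𝓝 0] fun y => c y * y ^ m) (hc : ContDiffAt 𝕜 k c 0) (hkm : k < m) :
    iteratedDeriv k g 0 = 0 := by
  rw [hg.iteratedDeriv_eq, iteratedDeriv_mul_pow_zero hc, Nat.descFactorial_eq_zero_iff_lt.mpr hkm,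
    Nat.cast_zero, zero_mul]

theorem iteratedDeriv_comp_of_deriv_eq_zero {u g : 𝕜 → 𝕜} {x : 𝕜} (hu : ContDiffAt 𝕜 3 u (g x))
    (hg : ContDiffAt 𝕜 3 g x) (hg' : deriv g x = 0) {k : ℕ} (hk₁ : 1 ≤ k) (hk₃ : k ≤ 3) :
    iteratedDeriv k (fun y => u (g y)) x = deriv u (g x) * iteratedDeriv k g x := by
  interval_cases k
  · simp only [iteratedDeriv_one]
    exact deriv_comp x (hu.differentiableAt (by norm_num)) (hg.differentiableAt (by norm_num))
  · change iteratedDeriv 2 (u ∘ g) x = _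
    simpa [hg'] using iteratedDeriv_comp_two (hu.of_le (by norm_num)) (hg.of_le (by norm_num))
  · change iteratedDeriv 3 (u ∘ g) x = _
    simpa [hg'] using iteratedDeriv_comp_three hu hg

variable {F : Type*} [NormedAddCommGroup F] [NormedSpace 𝕜 F]

theorem iteratedDeriv_apply {ι : Type*} [Fintype ι] {φ : 𝕜 → ι → F} {x : 𝕜} {k : ℕ}
    (hφ : ContDiffAt 𝕜 k φ x) (i : ι) :
    iteratedDeriv k φ x i = iteratedDeriv k (fun y => φ y i) x := by
  simp only [iteratedDeriv_eq_iteratedFDeriv]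
  rw [show (fun y => φ y i) = ContinuousLinearMap.proj (R := 𝕜) i ∘ φ from rfl,
    ContinuousLinearMap.iteratedFDeriv_comp_left _ hφ le_rfl]
  rfl

theorem iteratedDeriv_vecCons_three {u₀ u₁ u₂ : 𝕜 → F} {x : 𝕜} {k : ℕ}
    (h₀ : ContDiffAt 𝕜 k u₀ x) (h₁ : ContDiffAt 𝕜 k u₁ x) (h₂ : ContDiffAt 𝕜 k u₂ x) :
    iteratedDeriv k (fun y => ![u₀ y, u₁ y, u₂ y]) x =
      ![iteratedDeriv k u₀ x, iteratedDeriv k u₁ x, iteratedDeriv k u₂ x] := by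
  have hφ : ContDiffAt 𝕜 k (fun y => ![u₀ y, u₁ y, u₂ y]) x :=
    contDiffAt_pi.2 fun i => by fin_cases i <;> assumption
  ext i
  rw [iteratedDeriv_apply hφ]
  fin_cases i <;> rfl

end IteratedDeriv

noncomputable def cuspidalEdge (a b₀ b₁ b₂ : ℝ → ℝ) (b₃ : ℝ → ℝ → ℝ) (x y : ℝ) : Fin 3 → ℝ :=
  ![x, a x + y ^ 2 / 2, b₀ x + b₁ x * y ^ 2 + b₂ x * y ^ 3 + b₃ x y * y ^ 4]

section CuspidalEdge

variable {a b₀ b₁ b₂ d : ℝ → ℝ} {b₃ : ℝ → ℝ → ℝ}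

theorem double_point_curve_jet (hb₀ : ContDiffAt ℝ 3 b₀ (d 0)) (hb₁ : ContDiffAt ℝ 3 b₁ (d 0))
    (hd : ContDiffAt ℝ 3 d 0) (hb₀' : deriv b₀ (d 0) ≠ 0)
    (hE : ∀ k ≤ 3, iteratedDeriv k (fun y => b₀ (d y) + b₁ (d y) * y ^ 2) 0 = 0) :
    deriv d 0 = 0 ∧ iteratedDeriv 2 d 0 = -2 * b₁ (d 0) / deriv b₀ (d 0) ∧
      iteratedDeriv 3 d 0 = 0 := by
  have hb₀d : ContDiffAt ℝ 3 (fun y => b₀ (d y)) 0 := hb₀.comp 0 hd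
  have hb₁d : ContDiffAt ℝ 3 (fun y => b₁ (d y)) 0 := hb₁.comp 0 hd
  have hE' : ∀ k ≤ 3, iteratedDeriv k (fun y => b₀ (d y)) 0 +
      k.descFactorial 2 * iteratedDeriv (k - 2) (fun y => b₁ (d y)) 0 = 0 := fun k hk => by
    have hk' : (k : WithTop ℕ∞) ≤ 3 := by exact_mod_cast hk
    rw [← iteratedDeriv_mul_pow_zero (hb₁d.of_le hk'),
      ← iteratedDeriv_fun_add (hb₀d.of_le hk') ((hb₁d.of_le hk').mul (by fun_prop)), hE k hk]
  have hd₁ : deriv d 0 = 0 := by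
    have h := hE' 1 (by norm_num)
    rw [iteratedDeriv_one, ← Function.comp_def, deriv_comp 0 (hb₀.differentiableAt (by norm_num))
      (hd.differentiableAt (by norm_num))] at h
    simpa [hb₀'] using h
  have h₂ := hE' 2 (by norm_num)
  have h₃ := hE' 3 le_rfl
  simp only [Nat.descFactorial, Nat.reduceSub, iteratedDeriv_zero] at h₂ h₃
  rw [iteratedDeriv_comp_of_deriv_eq_zero hb₀ hd hd₁ (by norm_num) (by norm_num)] at h₂ h₃
  rw [iteratedDeriv_comp_of_deriv_eq_zero hb₁ hd hd₁ le_rfl (by norm_num), iteratedDeriv_one,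
    hd₁] at h₃
  refine ⟨hd₁, ?_, ?_⟩
  · field_simp
    linear_combination h₂
  · simpa [hb₀'] using h₃

theorem iteratedDeriv_cuspidalEdge_comp (ha : ContDiffAt ℝ 3 a (d 0))
    (hb₀ : ContDiffAt ℝ 3 b₀ (d 0)) (hb₁ : ContDiffAt ℝ 3 b₁ (d 0))
    (hb₂ : ContDiffAt ℝ 3 b₂ (d 0)) (hb₃ : ContDiffAt ℝ 3 (Function.uncurry b₃) (d 0, 0))
    (hd : ContDiffAt ℝ 3 d 0) (hd' : deriv d 0 = 0) (ha' : deriv a (d 0) = 0)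
    (hE : ∀ k ≤ 3, iteratedDeriv k (fun y => b₀ (d y) + b₁ (d y) * y ^ 2) 0 = 0)
    {k : ℕ} (hk₁ : 1 ≤ k) (hk₃ : k ≤ 3) :
    iteratedDeriv k (fun y => cuspidalEdge a b₀ b₁ b₂ b₃ (d y) y) 0 =
      ![iteratedDeriv k d 0, if k = 2 then 1 else 0, k.descFactorial 3 * b₂ (d 0)] := by
  have hk : (k : WithTop ℕ∞) ≤ 3 := by exact_mod_cast hk₃
  have ha_k := ha.of_le hk
  have hb₀_k := hb₀.of_le hk
  have hb₁_k := hb₁.of_le hk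
  have hb₂_k := hb₂.of_le hk
  have hb₃_k := hb₃.of_le hk
  have hd_k := hd.of_le hk
  have hsq : iteratedDeriv k (fun y : ℝ => y ^ 2 / 2) 0 = if k = 2 then 1 else 0 := by
    rw [iteratedDeriv_div_const, iteratedDeriv_fun_pow_zero]
    split_ifs <;> norm_num
  simp only [cuspidalEdge]
  rw [iteratedDeriv_vecCons_three hd_k (by fun_prop) (by fun_prop),
    iteratedDeriv_fun_add (by fun_prop) (by fun_prop),
    iteratedDeriv_comp_of_deriv_eq_zero ha hd hd' hk₁ hk₃, ha', hsq,
    iteratedDeriv_fun_add (by fun_prop) (by fun_prop),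
    iteratedDeriv_fun_add (by fun_prop) (by fun_prop),
    hE k hk₃, iteratedDeriv_mul_pow_zero (c := fun y => b₂ (d y)) (by fun_prop),
    iteratedDeriv_mul_pow_zero (c := fun y => b₃ (d y) y) (by fun_prop),
    Nat.descFactorial_eq_zero_iff_lt.mpr (by omega : k < 4), Nat.sub_eq_zero_of_le hk₃]
  simp

end CuspidalEdge

theorem stmt10_general (a b₀ b₁ b₂ : ℝ → ℝ) (b₃ : ℝ → ℝ → ℝ)
    (ha : ContDiff ℝ (⊤ : ℕ∞) a) (hb₀ : ContDiff ℝ (⊤ : ℕ∞) b₀)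
    (hb₁ : ContDiff ℝ (⊤ : ℕ∞) b₁) (hb₂ : ContDiff ℝ (⊤ : ℕ∞) b₂)
    (hb₃ : ContDiff ℝ (⊤ : ℕ∞) (Function.uncurry b₃))
    (ha0' : deriv a 0 = 0)
    (hb₀0' : deriv b₀ 0 ≠ 0)
    (ε : ℝ) (hε : 0 < ε) (d : ℝ → ℝ)
    (hd : ContDiffOn ℝ (⊤ : ℕ∞) d (Set.Ioo (-ε) ε)) (hd0 : d 0 = 0)
    (hdeq : ∀ y ∈ Set.Ioo (-ε) ε,
      b₀ (d y) + b₁ (d y) * y ^ 2 +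
        (1 / 2) * (b₃ (d y) y + b₃ (d y) (-y)) * y ^ 4 = 0)
    (f : ℝ → ℝ → Fin 3 → ℝ)
    (hf : ∀ x y, f x y =
      ![x, a x + y ^ 2 / 2,
        b₀ x + b₁ x * y ^ 2 + b₂ x * y ^ 3 + b₃ x y * y ^ 4])
    (dt : ℝ → Fin 3 → ℝ) (hdt : ∀ y, dt y = f (d y) y) :
    deriv dt 0 = 0 ∧
    iteratedDeriv 2 dt 0 = ![-2 * b₁ 0 / deriv b₀ 0, 1, 0] ∧
    iteratedDeriv 3 dt 0 = ![0, 0, 6 * b₂ 0] ∧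
    (b₂ 0 ≠ 0 → cross3 (iteratedDeriv 2 dt 0) (iteratedDeriv 3 dt 0) ≠ 0) := by
  have h3 : (3 : WithTop ℕ∞) ≤ ((⊤ : ℕ∞) : WithTop ℕ∞) := by norm_cast
  have hU : Set.Ioo (-ε) ε ∈ 𝓝 0 := Ioo_mem_nhds (neg_neg_iff_pos.2 hε) hε
  replace hd : ContDiffAt ℝ 3 d 0 := (hd.contDiffAt hU).of_le h3
  replace hb₃ := hb₃.of_le h3
  have hq : ContDiffAt ℝ 3 (fun y => -(1 / 2 * (b₃ (d y) y + b₃ (d y) (-y)))) 0 := by fun_prop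
  have hE : ∀ k ≤ 3, iteratedDeriv k (fun y => b₀ (d y) + b₁ (d y) * y ^ 2) 0 = 0 :=
    fun k hk => iteratedDeriv_eq_zero_of_eventuallyEq_mul_pow (m := 4)
      (eventually_of_mem hU fun y hy => by linear_combination hdeq y hy)
      (hq.of_le (by exact_mod_cast hk)) (by omega)
  obtain ⟨hd₁, hd₂, hd₃⟩ := double_point_curve_jet (hb₀.of_le h3).contDiffAt
    (hb₁.of_le h3).contDiffAt hd (by rwa [hd0]) hE
  have hjet (k : ℕ) := iteratedDeriv_cuspidalEdge_comp (k := k) (ha.of_le h3).contDiffAt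
    (hb₀.of_le h3).contDiffAt (hb₁.of_le h3).contDiffAt (hb₂.of_le h3).contDiffAt
    hb₃.contDiffAt hd hd₁ (by rwa [hd0]) hE
  have hdt' : dt = fun y => cuspidalEdge a b₀ b₁ b₂ b₃ (d y) y :=
    funext fun y => (hdt y).trans (hf _ _)
  rw [hd0] at hd₂ hjet
  have hdt₂ : iteratedDeriv 2 dt 0 = ![-2 * b₁ 0 / deriv b₀ 0, 1, 0] := by
    rw [hdt', hjet 2 (by norm_num) (by norm_num), hd₂]
    simp
  have hdt₃ : iteratedDeriv 3 dt 0 = ![0, 0, 6 * b₂ 0] := by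
    rw [hdt', hjet 3 (by norm_num) le_rfl, hd₃]
    simp [Nat.descFactorial]
  refine ⟨?_, hdt₂, hdt₃, fun hb₂0 h => hb₂0 ?_⟩
  · rw [← iteratedDeriv_one, hdt', hjet 1 le_rfl (by norm_num), iteratedDeriv_one, hd₁]
    simp
  · simpa [cross3, hdt₂, hdt₃] using congrFun h 0

/-- With `d` parametrising the double point curve of the folded cuspidal
edge in the source, the singular space curve `d̃(y) = f(d(y), y)` on the cuspidal edge
`f(x,y) = (x, a(x) + y²/2, b₀(x) + b₁(x)y² + b₂(x)y³ + b₃(x,y)y⁴)` satisfies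
`d̃'(0) = 0`, `d̃''(0) = (−2b₁(0)/b₀'(0), 1, 0)`, `d̃'''(0) = (0, 0, 6b₂(0))`; in
particular, if `b₂(0) ≠ 0` then `d̃''(0) × d̃'''(0) ≠ 0`, i.e. `0` is a `(2,3)`-type
singular point of `d̃`. -/
theorem stmt10 (a b₀ b₁ b₂ : ℝ → ℝ) (b₃ : ℝ → ℝ → ℝ)
    (ha : ContDiff ℝ (⊤ : ℕ∞) a) (hb₀ : ContDiff ℝ (⊤ : ℕ∞) b₀)
    (hb₁ : ContDiff ℝ (⊤ : ℕ∞) b₁) (hb₂ : ContDiff ℝ (⊤ : ℕ∞) b₂)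
    (hb₃ : ContDiff ℝ (⊤ : ℕ∞) (Function.uncurry b₃))
    (ha0 : a 0 = 0) (ha0' : deriv a 0 = 0) (hb₀0 : b₀ 0 = 0)
    (hb₀0' : deriv b₀ 0 ≠ 0)
    (ε : ℝ) (hε : 0 < ε) (d : ℝ → ℝ)
    (hd : ContDiffOn ℝ (⊤ : ℕ∞) d (Set.Ioo (-ε) ε)) (hd0 : d 0 = 0)
    (hdeq : ∀ y ∈ Set.Ioo (-ε) ε,
      b₀ (d y) + b₁ (d y) * y ^ 2 +
        (1 / 2) * (b₃ (d y) y + b₃ (d y) (-y)) * y ^ 4 = 0)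
    (f : ℝ → ℝ → Fin 3 → ℝ)
    (hf : ∀ x y, f x y =
      ![x, a x + y ^ 2 / 2,
        b₀ x + b₁ x * y ^ 2 + b₂ x * y ^ 3 + b₃ x y * y ^ 4])
    (dt : ℝ → Fin 3 → ℝ) (hdt : ∀ y, dt y = f (d y) y) :
    deriv dt 0 = 0 ∧
    iteratedDeriv 2 dt 0 = ![-2 * b₁ 0 / deriv b₀ 0, 1, 0] ∧
    iteratedDeriv 3 dt 0 = ![0, 0, 6 * b₂ 0] ∧
    (b₂ 0 ≠ 0 → cross3 (iteratedDeriv 2 dt 0) (iteratedDeriv 3 dt 0) ≠ 0) :=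
  stmt10_general a b₀ b₁ b₂ b₃ ha hb₀ hb₁ hb₂ hb₃ ha0' hb₀0' ε hε d hd hd0 hdeq f hf dt hdt
end
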